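/- Let C be a Z2Z4-additive code with generator matrix in the standard block form (rows of order two followed by δ rows of order four), and let C' be the subcode generated by the rows of order two with zero identity blocks together with the δ order-four rows (i.e., the last two blocks of rows). Then Φ(C) is linear if and only if Φ(C') is linear. -/

import Mathlib

open Polynomial

noncomputable section

abbrev Z2 := ZMod 2
abbrev Z4 := ZMod 4

/-- Coefficientwise reduction modulo 2. -/
def ρ : Z4 →+* Z2 := ZMod.castHom (show 2 ∣ 4 by norm_num) Z2

/-- The quotient ring `R[x]/(x^n - 1)`. -/
abbrev QR (R : Type) [CommRing R] (n : ℕ) :=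
  Polynomial R ⧸ Ideal.span {(Polynomial.X : Polynomial R) ^ n - 1}

def pmk {R : Type} [CommRing R] (n : ℕ) (p : Polynomial R) : QR R n :=
  Ideal.Quotient.mk _ p

/-- `Z4[x]`-module structure on `Z2[x]/(x^n-1)` via reduction mod 2;
this gives the action `p ⋆ (b | a) = (p̃ b | p a)` on the product. -/
instance (n : ℕ) : Module (Polynomial Z4) (QR Z2 n) :=
  Module.compHom _ ((Ideal.Quotient.mk _).comp (mapRingHom ρ) : Polynomial Z4 →+* QR Z2 n)

def hat (u : Z4) : Z2 := ((u.val / 2 : ℕ) : Z2)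

def til (u : Z4) : Z2 := ((u.val : ℕ) : Z2)

/-- The Gray map `φ(u') = (û' | ũ' + û')`, with the second block of coordinates
indexed by the right summand. -/
def gray {ι : Type} (u : ι → Z4) : (ι ⊕ ι) → Z2 :=
  Sum.elim (fun i => hat (u i)) (fun i => til (u i) + hat (u i))

/-- The extended Gray map `Φ(u | u') = (u | φ(u'))`. -/
def extGray {ι κ : Type} (v : (ι → Z2) × (κ → Z4)) : (ι → Z2) × ((κ ⊕ κ) → Z2) :=
  (v.1, gray v.2)

/-- Identification of `Z2^n` with `Z2[x]/(x^n-1)`. -/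
def toQ2 {n : ℕ} (u : Fin n → Z2) : QR Z2 n :=
  pmk n (∑ i, Polynomial.C (u i) * Polynomial.X ^ (i : ℕ))

/-- Identification of `Z4^n` with `Z4[x]/(x^n-1)`. -/
def toQ4 {n : ℕ} (u : Fin n → Z4) : QR Z4 n :=
  pmk n (∑ i, Polynomial.C (u i) * Polynomial.X ^ (i : ℕ))

/-- The standard polynomial identification of `Z2^α × Z4^β` with `R_{α,β}`. -/
def ident {α β : ℕ} (v : (Fin α → Z2) × (Fin β → Z4)) : QR Z2 α × QR Z4 β :=
  (toQ2 v.1, toQ4 v.2)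

/-- Right cyclic shift: `(u_0,…,u_{n-1}) ↦ (u_{n-1},u_0,…,u_{n-2})`. -/
def shiftR {n : ℕ} {R : Type} (u : Fin n → R) : Fin n → R :=
  fun i => u ((finRotate n).symm i)

/-- Simultaneous cyclic shift on both blocks of `Z2^α × Z4^β`. -/
def bshift {α β : ℕ} (v : (Fin α → Z2) × (Fin β → Z4)) : (Fin α → Z2) × (Fin β → Z4) :=
  (shiftR v.1, shiftR v.2)

/-- `IsTensorSquare n p q` says that `q = (p ⊗ p)`: `q` is the (monic) divisor of
`x^n - 1` in `Z2[x]` whose roots (in the splitting field of `x^n-1`) are exactly the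
products of pairs of roots of `p`. -/
def IsTensorSquare (n : ℕ) (p q : Polynomial Z2) : Prop :=
  q ∣ (Polynomial.X ^ n - 1) ∧ q.Monic ∧
    ∀ z : ((Polynomial.X : Polynomial Z2) ^ n - 1).SplittingField,
      Polynomial.aeval z q = 0 ↔
        ∃ z₁ z₂, Polynomial.aeval z₁ p = 0 ∧ Polynomial.aeval z₂ p = 0 ∧ z = z₁ * z₂

/-- The Nechaev permutation on `Z2^{2n}` (coordinates indexed by `Fin n ⊕ Fin n`,
with `inr i` standing for position `n + i`): it swaps positions `2i+1` and `n + 2i+1`. -/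
def nechaev {n : ℕ} (v : (Fin n ⊕ Fin n) → Z2) : (Fin n ⊕ Fin n) → Z2 :=
  Sum.elim (fun i => if Odd (i : ℕ) then v (Sum.inr i) else v (Sum.inl i))
    (fun i => if Odd (i : ℕ) then v (Sum.inl i) else v (Sum.inr i))

/-- The extended Nechaev–Gray map `Ψ(u | u') = (u | σ(φ(u')))`. -/
def nechaevGrayExt {α β : ℕ} (v : (Fin α → Z2) × (Fin β → Z4)) :
    (Fin α → Z2) × ((Fin β ⊕ Fin β) → Z2) :=
  (v.1, nechaev (gray v.2))

/-- Identification of `Z2^{2n}` (indexed by `Fin n ⊕ Fin n`) with `Z2[x]/(x^{2n}-1)`. -/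
def toQ2D {n : ℕ} (w : (Fin n ⊕ Fin n) → Z2) : QR Z2 (2 * n) :=
  pmk (2 * n) (∑ i : Fin n,
    (Polynomial.C (w (Sum.inl i)) * Polynomial.X ^ (i : ℕ) +
      Polynomial.C (w (Sum.inr i)) * Polynomial.X ^ (n + (i : ℕ))))

/-- Identification of `Z2^α × Z2^{2β}` with `Z2[x]/(x^α-1) × Z2[x]/(x^{2β}-1)`. -/
def pairD {α β : ℕ} (v : (Fin α → Z2) × ((Fin β ⊕ Fin β) → Z2)) :
    QR Z2 α × QR Z2 (2 * β) :=
  (toQ2 v.1, toQ2D v.2)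

def leeWt (u : Z4) : ℕ := min u.val (4 - u.val)

def leeDist {n : ℕ} (u v : Fin n → Z4) : ℕ := ∑ i, leeWt (u i - v i)

/-!
Over `ℤ/4`, `φ(a + b) = φ(a) + φ(b) + φ(2ab)`, so `Φ(D)` is linear exactly when the additive code
`D` is closed under `(u, v) ↦ 2(u * v)`. This map is biadditive and vanishes as soon as one
argument has order two, so for both `C` and `C'` closedness reduces to `2(r * r') ∈ C'` for
pairs of order-four rows. For `C` it is only clear that `2(r * r') ∈ C`; but `2(r * r')` has zero
binary part, and an element of `C` whose coordinates in the identity blocks `I_{κ₁}`, `I_{κ₂}`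
vanish has no component along the first two blocks of rows, so it lies in `C'`.
-/

section GrayMap

variable {ι κ : Type}

theorem gray_add_add_two_mul (u v : κ → Z4) :
    gray (u + v + 2 * (u * v)) = gray u + gray v := by
  have hat_eq : ∀ a b : Z4, hat (a + b + 2 * (a * b)) = hat a + hat b := by decide
  have til_eq : ∀ a b : Z4, til (a + b + 2 * (a * b)) = til a + til b := by decide
  funext k
  rcases k with k | k
  · exact hat_eq (u k) (v k)
  · simp only [gray, Sum.elim_inr, Pi.add_apply, Pi.mul_apply, Pi.ofNat_apply, hat_eq, til_eq]
    abel

theorem extGray_add_add_two_mul (u v : (ι → Z2) × (κ → Z4)) :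
    extGray (u + v + 2 * (u * v)) = extGray u + extGray v := by
  refine Prod.ext ?_ (gray_add_add_two_mul u.2 v.2)
  have two_eq_zero : (2 : ι → Z2) = 0 := funext fun _ => rfl
  simp [extGray, two_eq_zero]

theorem extGray_zero : extGray (0 : (ι → Z2) × (κ → Z4)) = 0 := by
  simpa using extGray_add_add_two_mul (0 : (ι → Z2) × (κ → Z4)) 0

theorem gray_injective : Function.Injective (gray (ι := κ)) := by
  have hat_til : ∀ a b : Z4, hat a = hat b → til a + hat a = til b + hat b → a = b := by decide
  intro u v h
  funext k
  exact hat_til _ _ (congrFun h (.inl k)) (congrFun h (.inr k))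

theorem extGray_injective : Function.Injective (extGray (ι := ι) (κ := κ)) :=
  Function.injective_id.prodMap gray_injective

theorem exists_submodule_coe_eq_extGray_image_iff (D : AddSubgroup ((ι → Z2) × (κ → Z4))) :
    (∃ S : Submodule Z2 ((ι → Z2) × ((κ ⊕ κ) → Z2)),
        (S : Set _) = extGray (ι := ι) (κ := κ) '' (D : Set _)) ↔
      ∀ u ∈ D, ∀ v ∈ D, 2 * (u * v) ∈ D := by
  constructor
  · rintro ⟨S, hS⟩ u hu v hv
    have mem_S : ∀ x ∈ D, extGray x ∈ S := fun x hx => by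
      rw [← SetLike.mem_coe, hS]; exact ⟨x, hx, rfl⟩
    obtain ⟨w, hw, hw_eq⟩ : extGray u + extGray v ∈ extGray '' (D : Set _) := by
      rw [← hS]; exact S.add_mem (mem_S u hu) (mem_S v hv)
    have hw_sum : w = u + v + 2 * (u * v) :=
      extGray_injective (hw_eq.trans (extGray_add_add_two_mul u v).symm)
    have h_corr : 2 * (u * v) = w - u - v := by rw [hw_sum]; abel
    exact h_corr ▸ sub_mem (sub_mem hw hu) hv
  · intro hD
    let H : AddSubgroup ((ι → Z2) × ((κ ⊕ κ) → Z2)) :=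
      { carrier := extGray '' (D : Set _)
        add_mem' := by
          rintro _ _ ⟨u, hu, rfl⟩ ⟨v, hv, rfl⟩
          exact ⟨_, add_mem (add_mem hu hv) (hD u hu v hv), extGray_add_add_two_mul u v⟩
        zero_mem' := ⟨0, D.zero_mem, extGray_zero⟩
        neg_mem' := fun {x} hx => (ZModModule.neg_eq_self x).symm ▸ hx }
    exact ⟨AddSubgroup.toZModSubmodule 2 H, rfl⟩

end GrayMap

theorem AddSubgroup.two_mul_mul_mem_closure_union_iff {R : Type*} [CommRing R] {s t : Set R}
    (hs : ∀ a ∈ s, 2 * a = 0) :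
    (∀ x ∈ closure (s ∪ t), ∀ y ∈ closure (s ∪ t), 2 * (x * y) ∈ closure (s ∪ t)) ↔
      ∀ a ∈ t, ∀ b ∈ t, 2 * (a * b) ∈ closure (s ∪ t) := by
  refine ⟨fun h a ha b hb => h a (subset_closure (.inr ha)) b (subset_closure (.inr hb)),
    fun h x hx y hy => ?_⟩
  induction hx, hy using closure_induction₂ with
  | mem a b ha hb =>
    rcases ha with ha | ha
    · rw [← mul_assoc, hs a ha, zero_mul]; exact zero_mem _
    rcases hb with hb | hb
    · rw [mul_left_comm, hs b hb, mul_zero]; exact zero_mem _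
    exact h a ha b hb
  | zero_left => simp
  | zero_right => simp
  | add_left _ _ _ _ _ _ h₁ h₂ => rw [add_mul, mul_add]; exact add_mem h₁ h₂
  | add_right _ _ _ _ _ _ h₁ h₂ => rw [mul_add, mul_add]; exact add_mem h₁ h₂
  | neg_left _ _ _ _ h => rw [neg_mul, mul_neg]; exact neg_mem h
  | neg_right _ _ _ _ h => rw [mul_neg, mul_neg]; exact neg_mem h

theorem AddSubgroup.mem_closure_of_mem_closure_union_of_map_eq_zero {G M : Type*}
    [AddCommGroup G] [AddZeroClass M] (p : G →+ M) {s t : Set G}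
    (hs : Disjoint (closure s) p.ker) (ht : ∀ x ∈ t, p x = 0) {w : G}
    (hw : w ∈ closure (s ∪ t)) (hpw : p w = 0) : w ∈ closure t := by
  rw [closure_union, mem_sup] at hw
  obtain ⟨x, hx, y, hy, rfl⟩ := hw
  have hpy : p y = 0 := (closure_le p.ker).mpr ht hy
  have hx0 : x = 0 := disjoint_def.mp hs hx (by simpa [hpy] using hpw)
  rwa [hx0, zero_add]

theorem AddSubgroup.disjoint_closure_range_ker {G ι : Type*} [AddCommGroup G] [Fintype ι]
    [DecidableEq ι] {r : ι → G} (hr : ∀ i, r i + r i = 0) (p : G →+ (ι → ZMod 2))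
    (hp : ∀ i, p (r i) = Pi.single i 1) : Disjoint (closure (Set.range r)) p.ker := by
  rw [disjoint_def]
  intro x hx hpx
  obtain ⟨n, rfl⟩ := mem_closure_range_iff_of_fintype.mp hx
  refine Finset.sum_eq_zero fun i _ => ?_
  obtain ⟨m, hm⟩ : Even (n i) := by
    simpa [map_sum, hp, Pi.single_apply, ZMod.intCast_eq_zero_iff_even] using
      congrFun (AddMonoidHom.mem_ker.mp hpx) i
  rw [hm, add_zsmul, ← zsmul_add, hr, zsmul_zero]

/-- Vanishes on the last two blocks of rows and sends the first two to the standard basis. -/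
def pivotCoords {κ₁ κ₂ a₃ : ℕ} {Q : Type} (T : Fin κ₁ → Fin κ₂ → Z2) :
    ((Fin κ₁ ⊕ (Fin κ₂ ⊕ Fin a₃) → Z2) × (Q → Z4)) →+ (Fin κ₁ ⊕ Fin κ₂ → Z2) where
  toFun v := Sum.elim (fun i => v.1 (.inl i))
    (fun j => v.1 (.inr (.inl j)) - ∑ i, v.1 (.inl i) * T i j)
  map_zero' := by funext k; rcases k with k | k <;> simp
  map_add' u v := by
    funext k
    rcases k with k | k
    · rfl
    · simp only [Prod.fst_add, Pi.add_apply, Sum.elim_inr, add_mul, Finset.sum_add_distrib]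
      abel

theorem extGray_linear_iff_subcode_general (κ₁ κ₂ a₃ q₁ g₃ δ : ℕ)
    (T : Fin κ₁ → Fin κ₂ → Z2) (Tb₁ : Fin κ₁ → Fin a₃ → Z2) (Tb₂ : Fin κ₂ → Fin a₃ → Z2)
    (T₂ : Fin κ₂ → Fin q₁ → Z4) (T₁ : Fin g₃ → Fin q₁ → Z4)
    (S' : Fin δ → Fin a₃ → Z2) (Sq : Fin δ → Fin q₁ → Z4) (Rm : Fin δ → Fin g₃ → Z4) :
    let B := Fin κ₁ ⊕ (Fin κ₂ ⊕ Fin a₃)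
    let Q := Fin q₁ ⊕ (Fin g₃ ⊕ Fin δ)
    let row₁ : Fin κ₁ → (B → Z2) × (Q → Z4) := fun i =>
      (Sum.elim (fun j => if j = i then 1 else 0) (Sum.elim (T i) (Tb₁ i)), 0)
    let row₂ : Fin κ₂ → (B → Z2) × (Q → Z4) := fun i =>
      (Sum.elim (fun _ => 0) (Sum.elim (fun j => if j = i then 1 else 0) (Tb₂ i)),
        Sum.elim (fun j => 2 * T₂ i j) (fun _ => 0))
    let row₃ : Fin g₃ → (B → Z2) × (Q → Z4) := fun i =>
      (0, Sum.elim (fun j => 2 * T₁ i j)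
        (Sum.elim (fun j => if j = i then 2 else 0) (fun _ => 0)))
    let row₄ : Fin δ → (B → Z2) × (Q → Z4) := fun i =>
      (Sum.elim (fun _ => 0) (Sum.elim (fun _ => 0) (S' i)),
        Sum.elim (Sq i) (Sum.elim (Rm i) (fun j => if j = i then 1 else 0)))
    let C : AddSubgroup ((B → Z2) × (Q → Z4)) := AddSubgroup.closure
      (Set.range row₁ ∪ Set.range row₂ ∪ Set.range row₃ ∪ Set.range row₄)
    let C' : AddSubgroup ((B → Z2) × (Q → Z4)) := AddSubgroup.closure
      (Set.range row₃ ∪ Set.range row₄)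
    ((∃ S : Submodule Z2 ((B → Z2) × ((Q ⊕ Q) → Z2)),
        (S : Set _) = extGray (ι := B) (κ := Q) '' (C : Set _)) ↔
      ∃ S : Submodule Z2 ((B → Z2) × ((Q ⊕ Q) → Z2)),
        (S : Set _) = extGray (ι := B) (κ := Q) '' (C' : Set _)) := by
  intro B Q row₁ row₂ row₃ row₄ C C'
  have order_two : ∀ x ∈ Set.range row₁ ∪ Set.range row₂ ∪ Set.range row₃, 2 * x = 0 := by
    have two_Z2 : (2 : Z2) = 0 := rfl
    have two_two_Z4 : ∀ a : Z4, 2 * (2 * a) = 0 := by decide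
    have four_Z4 : (2 : Z4) * 2 = 0 := rfl
    rintro _ ((⟨i, rfl⟩ | ⟨i, rfl⟩) | ⟨i, rfl⟩) <;> ext k <;> rcases k with k | k | k <;>
      simp [row₁, row₂, row₃, two_Z2, two_two_Z4, four_Z4]
  have pivot_rows : ∀ k, pivotCoords T (Sum.elim row₁ row₂ k) = Pi.single k 1 := by
    rintro (i | i) <;> ext (k | k) <;>
      simp [pivotCoords, row₁, row₂, Pi.single_apply, ite_mul, eq_comm]
  have pivot_ker : ∀ x ∈ Set.range row₃ ∪ Set.range row₄, pivotCoords T x = 0 := by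
    rintro _ (⟨i, rfl⟩ | ⟨i, rfl⟩) <;> ext (k | k) <;> simp [pivotCoords, row₃, row₄]
  have mem_C'_of_pivotCoords_eq_zero : ∀ w ∈ C, pivotCoords T w = 0 → w ∈ C' := by
    refine fun w hw => AddSubgroup.mem_closure_of_mem_closure_union_of_map_eq_zero _ ?_ pivot_ker
      (by rwa [← Set.union_assoc])
    rw [← Set.Sum.elim_range]
    refine AddSubgroup.disjoint_closure_range_ker (fun k => ?_) _ pivot_rows
    rw [← two_mul]
    exact order_two _ (.inl (Set.Sum.elim_range row₁ row₂ ▸ Set.mem_range_self k))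
  have two_mul_mem_iff : ∀ x, 2 * x ∈ C ↔ 2 * x ∈ C' := fun x =>
    ⟨fun h => mem_C'_of_pivotCoords_eq_zero _ h (by rw [two_mul, map_add, ZModModule.add_self]),
      fun h => AddSubgroup.closure_mono (Set.union_subset_union_left _ Set.subset_union_right) h⟩
  rw [exists_submodule_coe_eq_extGray_image_iff, exists_submodule_coe_eq_extGray_image_iff]
  calc _ ↔ ∀ a ∈ Set.range row₄, ∀ b ∈ Set.range row₄, 2 * (a * b) ∈ C :=
        AddSubgroup.two_mul_mul_mem_closure_union_iff order_two
    _ ↔ ∀ a ∈ Set.range row₄, ∀ b ∈ Set.range row₄, 2 * (a * b) ∈ C' :=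
        forall₄_congr fun a _ b _ => two_mul_mem_iff (a * b)
    _ ↔ _ := (AddSubgroup.two_mul_mul_mem_closure_union_iff fun x hx => order_two x (.inr hx)).symm

/-- Let `C` be generated by the rows of a generator matrix in the standard
block form
`[I T T_{b1} | 0 0 0], [0 I T_{b2} | 2T₂ 0 0], [0 0 0 | 2T₁ 2I 0], [0 0 S' | S R I]`
(with `T₁, T₂, R` having entries in `{0,1}`), and let `C'` be the subcode generated by
the last two blocks of rows.  Then `Φ(C)` is linear iff `Φ(C')` is linear. -/
theorem extGray_linear_iff_subcode (κ₁ κ₂ a₃ q₁ g₃ δ : ℕ)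
    (T : Fin κ₁ → Fin κ₂ → Z2) (Tb₁ : Fin κ₁ → Fin a₃ → Z2) (Tb₂ : Fin κ₂ → Fin a₃ → Z2)
    (T₂ : Fin κ₂ → Fin q₁ → Z4) (T₁ : Fin g₃ → Fin q₁ → Z4)
    (S' : Fin δ → Fin a₃ → Z2) (Sq : Fin δ → Fin q₁ → Z4) (Rm : Fin δ → Fin g₃ → Z4)
    (hT₁ : ∀ i j, T₁ i j = 0 ∨ T₁ i j = 1)
    (hT₂ : ∀ i j, T₂ i j = 0 ∨ T₂ i j = 1)
    (hR : ∀ i j, Rm i j = 0 ∨ Rm i j = 1) :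
    let B := Fin κ₁ ⊕ (Fin κ₂ ⊕ Fin a₃)
    let Q := Fin q₁ ⊕ (Fin g₃ ⊕ Fin δ)
    let row₁ : Fin κ₁ → (B → Z2) × (Q → Z4) := fun i =>
      (Sum.elim (fun j => if j = i then 1 else 0) (Sum.elim (T i) (Tb₁ i)), 0)
    let row₂ : Fin κ₂ → (B → Z2) × (Q → Z4) := fun i =>
      (Sum.elim (fun _ => 0) (Sum.elim (fun j => if j = i then 1 else 0) (Tb₂ i)),
        Sum.elim (fun j => 2 * T₂ i j) (fun _ => 0))
    let row₃ : Fin g₃ → (B → Z2) × (Q → Z4) := fun i =>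
      (0, Sum.elim (fun j => 2 * T₁ i j)
        (Sum.elim (fun j => if j = i then 2 else 0) (fun _ => 0)))
    let row₄ : Fin δ → (B → Z2) × (Q → Z4) := fun i =>
      (Sum.elim (fun _ => 0) (Sum.elim (fun _ => 0) (S' i)),
        Sum.elim (Sq i) (Sum.elim (Rm i) (fun j => if j = i then 1 else 0)))
    let C : AddSubgroup ((B → Z2) × (Q → Z4)) := AddSubgroup.closure
      (Set.range row₁ ∪ Set.range row₂ ∪ Set.range row₃ ∪ Set.range row₄)
    let C' : AddSubgroup ((B → Z2) × (Q → Z4)) := AddSubgroup.closure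
      (Set.range row₃ ∪ Set.range row₄)
    ((∃ S : Submodule Z2 ((B → Z2) × ((Q ⊕ Q) → Z2)),
        (S : Set _) = extGray (ι := B) (κ := Q) '' (C : Set _)) ↔
      ∃ S : Submodule Z2 ((B → Z2) × ((Q ⊕ Q) → Z2)),
        (S : Set _) = extGray (ι := B) (κ := Q) '' (C' : Set _)) :=
  extGray_linear_iff_subcode_general κ₁ κ₂ a₃ q₁ g₃ δ T Tb₁ Tb₂ T₂ T₁ S' Sq Rm
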